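/- The ring Z4[v]/(v^2 - 2) is a chain ring: its ideals form a chain R ⊇ (v) ⊇ (2) ⊇ (2v) ⊇ (0), and every ideal is one of these. -/

import Mathlib

/-!
The element `v` generates the maximal ideal: `a + b v` is a unit when `a` is odd, since its norm
`a² - 2b²` is then a unit of `ℤ/4`, and `a + b v = v (c v + b)` when `a = 2c`. As `v⁴ = 4 = 0`,
every nonzero element is a unit times a power of `v`, so every ideal is generated by the least
power of `v` it contains. The powers `1, v, v², v³, v⁴` are `1, v, 2, 2v, 0`.
-/

open Polynomial

/-- The ring `Z₄[v]/(v² - 2)`. -/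
abbrev R3 : Type := Polynomial (ZMod 4) ⧸ Ideal.span {(X : Polynomial (ZMod 4)) ^ 2 - 2}

/-- The image of `v` in `Z₄[v]/(v² - 2)`. -/
noncomputable def v3 : R3 := Ideal.Quotient.mk _ X

section ChainRing

variable {A : Type*} [CommRing A] {π : A}

theorem exists_isUnit_mul_pow_of_notMem_span_singleton_pow (hπ : ∀ x, ¬IsUnit x → π ∣ x) :
    ∀ (m : ℕ) (x : A), x ∉ Ideal.span {π ^ m} → ∃ u j, IsUnit u ∧ j < m ∧ x = u * π ^ j
  | 0, x, hx => by simp at hx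
  | m + 1, x, hx => by
    by_cases hx_unit : IsUnit x
    · exact ⟨x, 0, hx_unit, m.succ_pos, by simp⟩
    obtain ⟨y, rfl⟩ := hπ x hx_unit
    have hy : y ∉ Ideal.span {π ^ m} := fun hy => hx <| by
      rw [Ideal.mem_span_singleton] at hy ⊢
      rw [pow_succ']
      exact mul_dvd_mul_left π hy
    obtain ⟨u, j, hu, hj, rfl⟩ :=
      exists_isUnit_mul_pow_of_notMem_span_singleton_pow hπ m y hy
    exact ⟨u, j + 1, hu, by omega, by ring⟩

theorem Ideal.exists_eq_span_singleton_pow_of_nonunits_dvd (hπ : ∀ x, ¬IsUnit x → π ∣ x)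
    {n : ℕ} (hn : π ^ n = 0) (I : Ideal A) : ∃ k ≤ n, I = Ideal.span {π ^ k} := by
  classical
  have hn_mem : π ^ n ∈ I := hn ▸ I.zero_mem
  have hex : ∃ k, π ^ k ∈ I := ⟨n, hn_mem⟩
  refine ⟨Nat.find hex, Nat.find_min' hex hn_mem, le_antisymm (fun x hx => ?_)
    ((Ideal.span_singleton_le_iff_mem I).2 (Nat.find_spec hex))⟩
  by_contra hx_notMem
  obtain ⟨u, j, hu, hj, rfl⟩ :=
    exists_isUnit_mul_pow_of_notMem_span_singleton_pow hπ _ x hx_notMem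
  exact Nat.find_min hex hj ((Ideal.unit_mul_mem_iff_mem I hu).1 hx)

end ChainRing

theorem v3_sq : v3 ^ 2 = 2 := by
  have h : Ideal.Quotient.mk (Ideal.span {(X : (ZMod 4)[X]) ^ 2 - 2}) (X ^ 2 - 2) = 0 :=
    Ideal.Quotient.eq_zero_iff_mem.2 (Ideal.subset_span rfl)
  rwa [map_sub, map_pow, map_ofNat, sub_eq_zero] at h

theorem v3_pow_four : v3 ^ 4 = 0 := by
  have h4 : (4 : R3) = algebraMap (ZMod 4) R3 4 := (map_ofNat _ 4).symm
  rw [show v3 ^ 4 = (v3 ^ 2) ^ 2 by ring, v3_sq, show (2 : R3) ^ 2 = 4 by norm_num, h4,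
    show (4 : ZMod 4) = 0 from rfl, map_zero]

theorem exists_eq_algebraMap_add_algebraMap_mul_v3 (x : R3) :
    ∃ a b : ZMod 4, x = algebraMap (ZMod 4) R3 a + algebraMap (ZMod 4) R3 b * v3 := by
  obtain ⟨p, rfl⟩ := Ideal.Quotient.mk_surjective x
  have : Fact (1 < 4) := ⟨by norm_num⟩
  have hq : (X : (ZMod 4)[X]) ^ 2 - 2 = X ^ 2 - C 2 := by rw [map_ofNat]
  have hmonic : ((X : (ZMod 4)[X]) ^ 2 - 2).Monic := hq ▸ monic_X_pow_sub_C _ two_ne_zero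
  have hdeg : ((X : (ZMod 4)[X]) ^ 2 - 2).natDegree = 2 := hq ▸ natDegree_X_pow_sub_C
  have hr : (p %ₘ (X ^ 2 - 2)).natDegree ≤ 1 := by
    have := natDegree_modByMonic_lt p hmonic (fun h => by simp [h] at hdeg)
    omega
  have hpr : Ideal.Quotient.mk (Ideal.span {(X : (ZMod 4)[X]) ^ 2 - 2}) p =
      Ideal.Quotient.mk _ (p %ₘ (X ^ 2 - 2)) := by
    rw [Ideal.Quotient.mk_eq_mk_iff_sub_mem, Ideal.mem_span_singleton, modByMonic_eq_sub_mul_div]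
    simp
  obtain ⟨a, b, hab⟩ : ∃ a b : ZMod 4, p %ₘ (X ^ 2 - 2) = C b * X + C a :=
    ⟨_, _, eq_X_add_C_of_natDegree_le_one hr⟩
  refine ⟨a, b, ?_⟩
  rw [hpr, hab, map_add, map_mul, add_comm]
  rfl

theorem v3_dvd_of_not_isUnit {x : R3} (hx : ¬IsUnit x) : v3 ∣ x := by
  obtain ⟨a, b, rfl⟩ := exists_eq_algebraMap_add_algebraMap_mul_v3 x
  set φ := algebraMap (ZMod 4) R3
  by_cases ha : IsUnit a
  · refine absurd ?_ hx
    have hnorm : ∀ a b : ZMod 4, IsUnit a → IsUnit (a * a - 2 * b * b) := by decide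
    have hconj : (φ a + φ b * v3) * (φ a - φ b * v3) = φ (a * a - 2 * b * b) := by
      simp only [map_sub, map_mul, map_ofNat]
      linear_combination (-(φ b * φ b)) * v3_sq
    exact isUnit_of_mul_isUnit_left (hconj ▸ (hnorm a b ha).map φ)
  · have heven : ∀ a : ZMod 4, ¬IsUnit a → ∃ c, a = 2 * c := by decide
    obtain ⟨c, rfl⟩ := heven a ha
    exact ⟨φ c * v3 + φ b, by rw [map_mul, map_ofNat, ← v3_sq]; ring⟩

theorem stmt3 :
    (⊥ : Ideal R3) ≤ Ideal.span {2 * v3} ∧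
    Ideal.span {2 * v3} ≤ Ideal.span {(2 : R3)} ∧
    Ideal.span {(2 : R3)} ≤ Ideal.span {v3} ∧
    Ideal.span {v3} ≤ (⊤ : Ideal R3) ∧
    (∀ I : Ideal R3,
      I = ⊤ ∨ I = Ideal.span {v3} ∨ I = Ideal.span {(2 : R3)} ∨
      I = Ideal.span {2 * v3} ∨ I = ⊥) := by
  have h2v : 2 * v3 = v3 ^ 3 := by rw [← v3_sq]; ring
  have hle (i j : ℕ) (hij : i ≤ j) : Ideal.span {v3 ^ j} ≤ Ideal.span {v3 ^ i} :=
    Ideal.span_singleton_le_span_singleton.2 (pow_dvd_pow v3 hij)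
  rw [h2v, ← v3_sq]
  refine ⟨bot_le, hle 2 3 (by norm_num), by simpa using hle 1 2 (by norm_num), le_top, fun I => ?_⟩
  obtain ⟨k, hk, rfl⟩ := Ideal.exists_eq_span_singleton_pow_of_nonunits_dvd
    (fun _ => v3_dvd_of_not_isUnit) v3_pow_four I
  interval_cases k <;> simp [v3_pow_four]
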